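/- (Lemma 7.1, four fixed points: nonemptiness and disjointness.) Under the four-vertex hypotheses: (a) the multisets β̂₁, γ̂₁, δ̂₁, ε̂₁, η̂₁, λ̂₁ are all nonempty; (b) the ten multisets ω̂, β̂₀, γ̂₀, δ̂₀, β̂₁, γ̂₁, δ̂₁, ε̂₁, η̂₁, λ̂₁ are pairwise disjoint (no vector occurs in two of them). -/

import Mathlib

/-- Two multisets of vectors of `V` are *congruent mod `ρ`* if their images under the
quotient map `V → V ⧸ span {ρ}` are equal as multisets. -/
def CongMod {V : Type*} [AddCommGroup V] [Module (ZMod 2) V] (ρ : V)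
    (A B : Multiset V) : Prop :=
  A.map ⇑(Submodule.span (ZMod 2) {ρ}).mkQ = B.map ⇑(Submodule.span (ZMod 2) {ρ}).mkQ

section Helpers

variable {V : Type*} [AddCommGroup V] [Module (ZMod 2) V]

lemma char2_self_add (x : V) : x + x = 0 := by
  calc x + x = (1 : ZMod 2) • x + (1 : ZMod 2) • x := by rw [one_smul]
    _ = ((1 + 1 : ZMod 2)) • x := (add_smul _ _ x).symm
    _ = (0 : ZMod 2) • x := by rw [show (1 + 1 : ZMod 2) = 0 from by decide]
    _ = 0 := zero_smul _ x

lemma char2_neg (x : V) : -x = x :=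
  neg_eq_of_add_eq_zero_left (char2_self_add x)

variable [DecidableEq V]

lemma count_pair_of_filter {ρ : V} (hρ : ρ ≠ 0) (M : Multiset V) (x : V) :
    Multiset.card (M.filter fun a => a = x ∨ a = x + ρ)
      = M.count x + M.count (x + ρ) := by
  classical
  have hand : M.filter (fun a => a = x ∧ a = x + ρ) = 0 := by
    rw [Multiset.filter_eq_nil]
    rintro a _ ⟨rfl, h2⟩
    exact hρ (by have := left_eq_add.mp h2; exact this)
  have h := Multiset.filter_add_filter (fun a => a = x) (fun a => a = x + ρ) M
  rw [hand, add_zero] at h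
  have h1 : M.count x = Multiset.card (M.filter fun a => a = x) := by
    rw [Multiset.count, Multiset.countP_eq_card_filter]
    congr 1
    exact Multiset.filter_congr (fun a _ => by constructor <;> (intro h; exact h.symm))
  have h2 : M.count (x + ρ) = Multiset.card (M.filter fun a => a = x + ρ) := by
    rw [Multiset.count, Multiset.countP_eq_card_filter]
    congr 1
    exact Multiset.filter_congr (fun a _ => by constructor <;> (intro h; exact h.symm))
  rw [h1, h2, ← Multiset.card_add, h]

lemma pair_count {ρ : V} (hρ : ρ ≠ 0) {A A' : Multiset V} (h : CongMod ρ A A') (x : V) :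
    A.count x + A.count (x + ρ) = A'.count x + A'.count (x + ρ) := by
  classical
  have key : ∀ M : Multiset V,
      (M.map ⇑(Submodule.span (ZMod 2) {ρ}).mkQ).count ((Submodule.span (ZMod 2) {ρ}).mkQ x)
        = M.count x + M.count (x + ρ) := by
    intro M
    rw [Multiset.count_map]
    rw [← count_pair_of_filter hρ M x]
    congr 1
    apply Multiset.filter_congr
    intro a _
    rw [Submodule.mkQ_apply, Submodule.mkQ_apply, Submodule.Quotient.eq,
      Submodule.mem_span_singleton]
    constructor
    · rintro ⟨c, hc⟩
      rcases (by decide : ∀ c : ZMod 2, c = 0 ∨ c = 1) c with rfl | rfl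
      · rw [zero_smul] at hc
        left
        exact (sub_eq_zero.mp hc.symm).symm
      · rw [one_smul] at hc
        right
        have : a = x - ρ := by rw [hc]; abel
        rw [this, sub_eq_add_neg, char2_neg]
    · rintro (rfl | rfl)
      · exact ⟨0, by rw [zero_smul, sub_self]⟩
      · refine ⟨1, ?_⟩
        have hx : x - (x + ρ) = -ρ := by abel
        rw [one_smul, hx, char2_neg]
  have h1 := key A
  have h2 := key A'
  rw [h] at h1
  rw [h1] at h2
  exact h2

lemma lemmaA (W X Y1 Y2 Z1 Z2 : Multiset V)
    (hZ10 : Z1.count 0 = 0) (hZ20 : Z2.count 0 = 0)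
    (hY : ∃ x, Y1.count x ≠ Y2.count x)
    (hZ : ∃ x, Z1.count x ≠ Z2.count x)
    (hflipZ : ∀ ξ, (ξ ∈ W ∨ ξ ∈ X ∨ ξ ∈ Y1 ∨ ξ ∈ Y2) →
      ∀ x, Z1.count x + Z1.count (x + ξ) = Z2.count x + Z2.count (x + ξ))
    (hflipY : ∀ ξ ∈ Z2,
      ∀ x, Y1.count x + Y1.count (x + ξ) = Y2.count x + Y2.count (x + ξ))
    (hspan : ∀ U : Submodule (ZMod 2) V,
      (∀ v, (v ∈ W ∨ v ∈ X ∨ v ∈ Y1 ∨ v ∈ Z2) → v ∈ U) → ∀ v, v ∈ U) :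
    False := by
  classical
  obtain ⟨x1, hx1⟩ := hZ
  obtain ⟨x2, hx2⟩ := hY
  set S : Set V := {v | v ∈ W ∨ v ∈ X ∨ v ∈ Y1 ∨ v ∈ Y2} with hS
  let Zs : Submodule (ZMod 2) V :=
    { carrier := {u | ∀ x, (Z1.count x = Z2.count x ↔ Z1.count (x + u) = Z2.count (x + u))}
      add_mem' := by
        intro u u' hu hu' x
        have h1 := hu x
        have h2 := hu' (x + u)
        rw [add_assoc] at h2
        exact h1.trans h2
      zero_mem' := by intro x; rw [add_zero]
      smul_mem' := by
        intro c u hu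
        rcases (by decide : ∀ c : ZMod 2, c = 0 ∨ c = 1) c with rfl | rfl
        · rw [zero_smul]
          intro x
          rw [add_zero]
        · rw [one_smul]
          exact hu }
  have hSZ : S ⊆ (Zs : Set V) := by
    intro v hv x
    have := hflipZ v hv x
    omega
  have hU1 : Submodule.span (ZMod 2) S ≤ Zs := Submodule.span_le.mpr hSZ
  have hx1mem : x1 ∉ Submodule.span (ZMod 2) S := by
    intro hmem
    have hzs := hU1 hmem x1
    rw [char2_self_add x1] at hzs
    exact hx1 (hzs.mpr (by rw [hZ10, hZ20]))
  have hε : ∃ ε ∈ Z2, ε ∉ Submodule.span (ZMod 2) S := by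
    by_contra hc
    push_neg at hc
    refine hx1mem (hspan (Submodule.span (ZMod 2) S) ?_ x1)
    rintro v (h | h | h | h)
    · exact Submodule.subset_span (Or.inl h)
    · exact Submodule.subset_span (Or.inr (Or.inl h))
    · exact Submodule.subset_span (Or.inr (Or.inr (Or.inl h)))
    · exact hc v h
  obtain ⟨ε, hεZ2, hεnot⟩ := hε
  have memS : ∀ y : V, Y1.count y ≠ Y2.count y → y ∈ S := by
    intro y hy
    by_cases h1 : y ∈ Y1
    · exact Or.inr (Or.inr (Or.inl h1))
    · refine Or.inr (Or.inr (Or.inr ?_))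
      have h0 : Y1.count y = 0 := Multiset.count_eq_zero.mpr h1
      have : Y2.count y ≠ 0 := by omega
      exact Multiset.count_ne_zero.mp this
  have hx2S : x2 ∈ Submodule.span (ZMod 2) S := Submodule.subset_span (memS x2 hx2)
  have hx2e : (x2 + ε) ∈ Submodule.span (ZMod 2) S := by
    refine Submodule.subset_span (memS (x2 + ε) ?_)
    have := hflipY ε hεZ2 x2
    omega
  have : ε ∈ Submodule.span (ZMod 2) S := by
    have h := Submodule.add_mem _ hx2S hx2e
    rwa [show x2 + (x2 + ε) = ε by rw [← add_assoc, char2_self_add, zero_add]] at h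
  exact hεnot this

end Helpers

set_option maxHeartbeats 1000000 in
/- Four-vertex hypotheses: `W, B, C, D, E, H, L` model `ω̂, β̂, γ̂, δ̂, ε̂, η̂, λ̂`. -/
theorem four_fixed_points_nonempty_disjoint
    {V : Type*} [AddCommGroup V] [Module (ZMod 2) V] [FiniteDimensional (ZMod 2) V]
    [DecidableEq V]
    (k n : ℕ) (hk : Module.finrank (ZMod 2) V = k) (hk3 : 3 ≤ k)
    (W B C D E H L : Multiset V)
    (hW0 : ∀ v ∈ W, v ≠ (0 : V)) (hB0 : ∀ v ∈ B, v ≠ (0 : V)) (hC0 : ∀ v ∈ C, v ≠ (0 : V))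
    (hD0 : ∀ v ∈ D, v ≠ (0 : V)) (hE0 : ∀ v ∈ E, v ≠ (0 : V)) (hH0 : ∀ v ∈ H, v ≠ (0 : V))
    (hL0 : ∀ v ∈ L, v ≠ (0 : V))
    (Ap Aq Ar As : Multiset V)
    (hAp : Ap = W + B + C + D) (hAq : Aq = W + B + E + H)
    (hAr : Ar = W + E + C + L) (hAs : As = W + D + H + L)
    (hcardp : Multiset.card Ap = n) (hcardq : Multiset.card Aq = n)
    (hcardr : Multiset.card Ar = n) (hcards : Multiset.card As = n)
    (hpq : Ap ≠ Aq) (hpr : Ap ≠ Ar) (hps : Ap ≠ As)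
    (hqr : Aq ≠ Ar) (hqs : Aq ≠ As) (hrs : Ar ≠ As)
    (hspanp : Submodule.span (ZMod 2) {v : V | v ∈ Ap} = ⊤)
    (hspanq : Submodule.span (ZMod 2) {v : V | v ∈ Aq} = ⊤)
    (hspanr : Submodule.span (ZMod 2) {v : V | v ∈ Ar} = ⊤)
    (hspans : Submodule.span (ZMod 2) {v : V | v ∈ As} = ⊤)
    (hWB : ∀ v, v ∈ W → v ∈ B → False) (hWC : ∀ v, v ∈ W → v ∈ C → False)
    (hWD : ∀ v, v ∈ W → v ∈ D → False) (hWE : ∀ v, v ∈ W → v ∈ E → False)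
    (hWH : ∀ v, v ∈ W → v ∈ H → False) (hWL : ∀ v, v ∈ W → v ∈ L → False)
    (hBC : ∀ v, v ∈ B → v ∈ C → False) (hBD : ∀ v, v ∈ B → v ∈ D → False)
    (hBE : ∀ v, v ∈ B → v ∈ E → False) (hBH : ∀ v, v ∈ B → v ∈ H → False)
    (hCD : ∀ v, v ∈ C → v ∈ D → False) (hCE : ∀ v, v ∈ C → v ∈ E → False)
    (hCL : ∀ v, v ∈ C → v ∈ L → False)
    (hDH : ∀ v, v ∈ D → v ∈ H → False) (hDL : ∀ v, v ∈ D → v ∈ L → False)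
    (hEH : ∀ v, v ∈ E → v ∈ H → False) (hEL : ∀ v, v ∈ E → v ∈ L → False)
    (hHL : ∀ v, v ∈ H → v ∈ L → False)
    (hP2B : ∀ β ∈ B, CongMod β Ap Aq)
    (hP2C : ∀ γ ∈ C, CongMod γ Ap Ar)
    (hP2D : ∀ δ ∈ D, CongMod δ Ap As)
    (hP2E : ∀ ε ∈ E, CongMod ε Aq Ar)
    (hP2H : ∀ η ∈ H, CongMod η Aq As)
    (hP2L : ∀ lam ∈ L, CongMod lam Ar As)
    (hP2W : ∀ ξ ∈ W, CongMod ξ Ap Aq ∧ CongMod ξ Ap Ar ∧ CongMod ξ Ap As ∧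
        CongMod ξ Aq Ar ∧ CongMod ξ Aq As ∧ CongMod ξ Ar As)
    (B0 B1 L1 C0 C1 H1 D0 D1 E1 : Multiset V)
    (hB0def : B0 = B ∩ L) (hB1def : B1 = B - B0) (hL1def : L1 = L - B0)
    (hC0def : C0 = C ∩ H) (hC1def : C1 = C - C0) (hH1def : H1 = H - C0)
    (hD0def : D0 = D ∩ E) (hD1def : D1 = D - D0) (hE1def : E1 = E - D0)
    :
    (B1 ≠ 0 ∧ C1 ≠ 0 ∧ D1 ≠ 0 ∧ E1 ≠ 0 ∧ H1 ≠ 0 ∧ L1 ≠ 0) ∧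
    List.Pairwise (fun s t : Multiset V => ∀ v, v ∈ s → v ∈ t → False)
      [W, B0, C0, D0, B1, C1, D1, E1, H1, L1] := by
  classical
  -- count expansions
  have cAp : ∀ y : V, Ap.count y = W.count y + B.count y + C.count y + D.count y := by
    intro y; rw [hAp]; simp [Multiset.count_add]
  have cAq : ∀ y : V, Aq.count y = W.count y + B.count y + E.count y + H.count y := by
    intro y; rw [hAq]; simp [Multiset.count_add]
  have cAr : ∀ y : V, Ar.count y = W.count y + E.count y + C.count y + L.count y := by
    intro y; rw [hAr]; simp [Multiset.count_add]
  have cAs : ∀ y : V, As.count y = W.count y + D.count y + H.count y + L.count y := by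
    intro y; rw [hAs]; simp [Multiset.count_add]
  -- pair equations from congruences
  have hPQ : ∀ ρ : V, ρ ≠ 0 → CongMod ρ Ap Aq → ∀ y : V,
      C.count y + D.count y + (C.count (y + ρ) + D.count (y + ρ)) =
        E.count y + H.count y + (E.count (y + ρ) + H.count (y + ρ)) := by
    intro ρ hρ hc y
    have h := pair_count hρ hc y
    rw [cAp y, cAp (y + ρ), cAq y, cAq (y + ρ)] at h
    omega
  have hPR : ∀ ρ : V, ρ ≠ 0 → CongMod ρ Ap Ar → ∀ y : V,
      B.count y + D.count y + (B.count (y + ρ) + D.count (y + ρ)) =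
        E.count y + L.count y + (E.count (y + ρ) + L.count (y + ρ)) := by
    intro ρ hρ hc y
    have h := pair_count hρ hc y
    rw [cAp y, cAp (y + ρ), cAr y, cAr (y + ρ)] at h
    omega
  have hPS : ∀ ρ : V, ρ ≠ 0 → CongMod ρ Ap As → ∀ y : V,
      B.count y + C.count y + (B.count (y + ρ) + C.count (y + ρ)) =
        H.count y + L.count y + (H.count (y + ρ) + L.count (y + ρ)) := by
    intro ρ hρ hc y
    have h := pair_count hρ hc y
    rw [cAp y, cAp (y + ρ), cAs y, cAs (y + ρ)] at h
    omega
  have hQR : ∀ ρ : V, ρ ≠ 0 → CongMod ρ Aq Ar → ∀ y : V,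
      B.count y + H.count y + (B.count (y + ρ) + H.count (y + ρ)) =
        C.count y + L.count y + (C.count (y + ρ) + L.count (y + ρ)) := by
    intro ρ hρ hc y
    have h := pair_count hρ hc y
    rw [cAq y, cAq (y + ρ), cAr y, cAr (y + ρ)] at h
    omega
  have hQS : ∀ ρ : V, ρ ≠ 0 → CongMod ρ Aq As → ∀ y : V,
      B.count y + E.count y + (B.count (y + ρ) + E.count (y + ρ)) =
        D.count y + L.count y + (D.count (y + ρ) + L.count (y + ρ)) := by
    intro ρ hρ hc y
    have h := pair_count hρ hc y
    rw [cAq y, cAq (y + ρ), cAs y, cAs (y + ρ)] at h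
    omega
  have hRS : ∀ ρ : V, ρ ≠ 0 → CongMod ρ Ar As → ∀ y : V,
      E.count y + C.count y + (E.count (y + ρ) + C.count (y + ρ)) =
        D.count y + H.count y + (D.count (y + ρ) + H.count (y + ρ)) := by
    intro ρ hρ hc y
    have h := pair_count hρ hc y
    rw [cAr y, cAr (y + ρ), cAs y, cAs (y + ρ)] at h
    omega
  -- zero counts at 0
  have zW : W.count 0 = 0 := Multiset.count_eq_zero.mpr (fun h => hW0 0 h rfl)
  have zB : B.count 0 = 0 := Multiset.count_eq_zero.mpr (fun h => hB0 0 h rfl)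
  have zC : C.count 0 = 0 := Multiset.count_eq_zero.mpr (fun h => hC0 0 h rfl)
  have zD : D.count 0 = 0 := Multiset.count_eq_zero.mpr (fun h => hD0 0 h rfl)
  have zE : E.count 0 = 0 := Multiset.count_eq_zero.mpr (fun h => hE0 0 h rfl)
  have zH : H.count 0 = 0 := Multiset.count_eq_zero.mpr (fun h => hH0 0 h rfl)
  have zL : L.count 0 = 0 := Multiset.count_eq_zero.mpr (fun h => hL0 0 h rfl)
  -- cardinalities
  have hbl : Multiset.card B = Multiset.card L ∧ Multiset.card C = Multiset.card H ∧
      Multiset.card D = Multiset.card E := by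
    have e1 : Multiset.card Ap = Multiset.card W + Multiset.card B + Multiset.card C
        + Multiset.card D := by rw [hAp]; simp
    have e2 : Multiset.card Aq = Multiset.card W + Multiset.card B + Multiset.card E
        + Multiset.card H := by rw [hAq]; simp
    have e3 : Multiset.card Ar = Multiset.card W + Multiset.card E + Multiset.card C
        + Multiset.card L := by rw [hAr]; simp
    have e4 : Multiset.card As = Multiset.card W + Multiset.card D + Multiset.card H
        + Multiset.card L := by rw [hAs]; simp
    omega
  -- the three impossibility results
  have hBLne : B ≠ L := by
    intro hBL
    have cBL : ∀ y : V, B.count y = L.count y := fun y => by rw [hBL]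
    have hY : ∃ x, C.count x ≠ H.count x := by
      by_contra hcon
      push_neg at hcon
      apply hps
      apply Multiset.ext.mpr
      intro a
      rw [cAp a, cAs a]
      have := hcon a
      have := cBL a
      omega
    have hZ : ∃ x, D.count x ≠ E.count x := by
      by_contra hcon
      push_neg at hcon
      apply hqs
      apply Multiset.ext.mpr
      intro a
      rw [cAq a, cAs a]
      have := hcon a
      have := cBL a
      omega
    refine lemmaA W B C H D E zD zE hY hZ ?_ ?_ ?_
    · rintro ξ (hξ | hξ | hξ | hξ) x
      · have h := hPR ξ (hW0 ξ hξ) (hP2W ξ hξ).2.1 x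
        have := cBL x; have := cBL (x + ξ); omega
      · have h1 := hPQ ξ (hB0 ξ hξ) (hP2B ξ hξ) x
        have h2 := hRS ξ (hB0 ξ hξ) (hP2L ξ (by rwa [← hBL])) x
        omega
      · have h := hPR ξ (hC0 ξ hξ) (hP2C ξ hξ) x
        have := cBL x; have := cBL (x + ξ); omega
      · have h := hQS ξ (hH0 ξ hξ) (hP2H ξ hξ) x
        have := cBL x; have := cBL (x + ξ); omega
    · intro ξ hξ x
      have h := hQR ξ (hE0 ξ hξ) (hP2E ξ hξ) x
      have := cBL x; have := cBL (x + ξ); omega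
    · intro U hU v
      have hsub : {v : V | v ∈ Ar} ⊆ (U : Set V) := by
        intro w hw
        rw [Set.mem_setOf_eq, hAr] at hw
        rcases Multiset.mem_add.mp hw with hw | hw
        · rcases Multiset.mem_add.mp hw with hw | hw
          · rcases Multiset.mem_add.mp hw with hw | hw
            · exact hU w (Or.inl hw)
            · exact hU w (Or.inr (Or.inr (Or.inr hw)))
          · exact hU w (Or.inr (Or.inr (Or.inl hw)))
        · exact hU w (Or.inr (Or.inl (by rwa [hBL])))
      have h2 : (⊤ : Submodule (ZMod 2) V) ≤ U := hspanr ▸ Submodule.span_le.mpr hsub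
      exact h2 trivial
  have hCHne : C ≠ H := by
    intro hCH
    have cCH : ∀ y : V, C.count y = H.count y := fun y => by rw [hCH]
    have hY : ∃ x, D.count x ≠ E.count x := by
      by_contra hcon
      push_neg at hcon
      apply hpq
      apply Multiset.ext.mpr
      intro a
      rw [cAp a, cAq a]
      have := hcon a; have := cCH a; omega
    have hZ : ∃ x, B.count x ≠ L.count x := by
      by_contra hcon
      push_neg at hcon
      apply hps
      apply Multiset.ext.mpr
      intro a
      rw [cAp a, cAs a]
      have := hcon a; have := cCH a; omega
    refine lemmaA W C D E B L zB zL hY hZ ?_ ?_ ?_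
    · rintro ξ (hξ | hξ | hξ | hξ) x
      · have h := hPS ξ (hW0 ξ hξ) (hP2W ξ hξ).2.2.1 x
        have := cCH x; have := cCH (x + ξ); omega
      · have h1 := hPR ξ (hC0 ξ hξ) (hP2C ξ hξ) x
        have h2 := hQS ξ (hC0 ξ hξ) (hP2H ξ (by rwa [← hCH])) x
        omega
      · have h := hPS ξ (hD0 ξ hξ) (hP2D ξ hξ) x
        have := cCH x; have := cCH (x + ξ); omega
      · have h := hQR ξ (hE0 ξ hξ) (hP2E ξ hξ) x
        have := cCH x; have := cCH (x + ξ); omega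
    · intro ξ hξ x
      have h := hRS ξ (hL0 ξ hξ) (hP2L ξ hξ) x
      have := cCH x; have := cCH (x + ξ); omega
    · intro U hU v
      have hsub : {v : V | v ∈ As} ⊆ (U : Set V) := by
        intro w hw
        rw [Set.mem_setOf_eq, hAs] at hw
        rcases Multiset.mem_add.mp hw with hw | hw
        · rcases Multiset.mem_add.mp hw with hw | hw
          · rcases Multiset.mem_add.mp hw with hw | hw
            · exact hU w (Or.inl hw)
            · exact hU w (Or.inr (Or.inr (Or.inl hw)))
          · exact hU w (Or.inr (Or.inl (by rwa [hCH])))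
        · exact hU w (Or.inr (Or.inr (Or.inr hw)))
      have h2 : (⊤ : Submodule (ZMod 2) V) ≤ U := hspans ▸ Submodule.span_le.mpr hsub
      exact h2 trivial
  have hDEne : D ≠ E := by
    intro hDE
    have cDE : ∀ y : V, D.count y = E.count y := fun y => by rw [hDE]
    have hY : ∃ x, C.count x ≠ H.count x := by
      by_contra hcon
      push_neg at hcon
      apply hpq
      apply Multiset.ext.mpr
      intro a
      rw [cAp a, cAq a]
      have := hcon a; have := cDE a; omega
    have hZ : ∃ x, B.count x ≠ L.count x := by
      by_contra hcon
      push_neg at hcon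
      apply hpr
      apply Multiset.ext.mpr
      intro a
      rw [cAp a, cAr a]
      have := hcon a; have := cDE a; omega
    refine lemmaA W D C H B L zB zL hY hZ ?_ ?_ ?_
    · rintro ξ (hξ | hξ | hξ | hξ) x
      · have h := hPR ξ (hW0 ξ hξ) (hP2W ξ hξ).2.1 x
        have := cDE x; have := cDE (x + ξ); omega
      · have h1 := hPS ξ (hD0 ξ hξ) (hP2D ξ hξ) x
        have h2 := hQR ξ (hD0 ξ hξ) (hP2E ξ (by rwa [← hDE])) x
        omega
      · have h := hPR ξ (hC0 ξ hξ) (hP2C ξ hξ) x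
        have := cDE x; have := cDE (x + ξ); omega
      · have h := hQS ξ (hH0 ξ hξ) (hP2H ξ hξ) x
        have := cDE x; have := cDE (x + ξ); omega
    · intro ξ hξ x
      have h := hRS ξ (hL0 ξ hξ) (hP2L ξ hξ) x
      have := cDE x; have := cDE (x + ξ); omega
    · intro U hU v
      have hsub : {v : V | v ∈ Ar} ⊆ (U : Set V) := by
        intro w hw
        rw [Set.mem_setOf_eq, hAr] at hw
        rcases Multiset.mem_add.mp hw with hw | hw
        · rcases Multiset.mem_add.mp hw with hw | hw
          · rcases Multiset.mem_add.mp hw with hw | hw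
            · exact hU w (Or.inl hw)
            · exact hU w (Or.inr (Or.inl (by rwa [hDE])))
          · exact hU w (Or.inr (Or.inr (Or.inl hw)))
        · exact hU w (Or.inr (Or.inr (Or.inr hw)))
      have h2 : (⊤ : Submodule (ZMod 2) V) ≤ U := hspanr ▸ Submodule.span_le.mpr hsub
      exact h2 trivial
  -- witnesses
  have wCH : ∃ x, C.count x ≠ H.count x := by
    by_contra hcon; push_neg at hcon
    exact hCHne (Multiset.ext.mpr hcon)
  have wDE : ∃ x, D.count x ≠ E.count x := by
    by_contra hcon; push_neg at hcon
    exact hDEne (Multiset.ext.mpr hcon)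
  -- nonemptiness
  have hB1ne : B1 ≠ 0 := by
    intro h0
    have hle : B ≤ L := le_trans (tsub_eq_zero_iff_le.mp (hB1def ▸ h0))
      (hB0def ▸ (Multiset.inter_le_right : B ∩ L ≤ L))
    exact hBLne (Multiset.eq_of_le_of_card_le hle (le_of_eq hbl.1.symm))
  have hL1ne : L1 ≠ 0 := by
    intro h0
    have hle : L ≤ B := le_trans (tsub_eq_zero_iff_le.mp (hL1def ▸ h0))
      (hB0def ▸ (Multiset.inter_le_left : B ∩ L ≤ B))
    exact hBLne (Multiset.eq_of_le_of_card_le hle (le_of_eq hbl.1)).symm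
  have hC1ne : C1 ≠ 0 := by
    intro h0
    have hle : C ≤ H := le_trans (tsub_eq_zero_iff_le.mp (hC1def ▸ h0))
      (hC0def ▸ (Multiset.inter_le_right : C ∩ H ≤ H))
    exact hCHne (Multiset.eq_of_le_of_card_le hle (le_of_eq hbl.2.1.symm))
  have hH1ne : H1 ≠ 0 := by
    intro h0
    have hle : H ≤ C := le_trans (tsub_eq_zero_iff_le.mp (hH1def ▸ h0))
      (hC0def ▸ (Multiset.inter_le_left : C ∩ H ≤ C))
    exact hCHne (Multiset.eq_of_le_of_card_le hle (le_of_eq hbl.2.1)).symm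
  have hD1ne : D1 ≠ 0 := by
    intro h0
    have hle : D ≤ E := le_trans (tsub_eq_zero_iff_le.mp (hD1def ▸ h0))
      (hD0def ▸ (Multiset.inter_le_right : D ∩ E ≤ E))
    exact hDEne (Multiset.eq_of_le_of_card_le hle (le_of_eq hbl.2.2.symm))
  have hE1ne : E1 ≠ 0 := by
    intro h0
    have hle : E ≤ D := le_trans (tsub_eq_zero_iff_le.mp (hE1def ▸ h0))
      (hD0def ▸ (Multiset.inter_le_left : D ∩ E ≤ D))
    exact hDEne (Multiset.eq_of_le_of_card_le hle (le_of_eq hbl.2.2)).symm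
  -- count-zero helper
  have cz : ∀ (M : Multiset V) (y : V), (y ∈ M → False) → M.count y = 0 :=
    fun M y h => Multiset.count_eq_zero.mpr h
  have mcnt : ∀ (M : Multiset V) (y : V), M.count y ≠ 0 → y ∈ M :=
    fun M y h => Multiset.count_ne_zero.mp h
  -- SB : multiplicities agree on B ∩ L
  have SB : ∀ v, v ∈ B → v ∈ L → B.count v = L.count v := by
    intro v hvB hvL
    have hv0 : v ≠ 0 := hB0 v hvB
    have hcd1 := hPQ v hv0 (hP2B v hvB)
    have hcd2 := hRS v hv0 (hP2L v hvL)
    have hcflip : ∀ x : V, C.count x + C.count (x + v) = H.count x + H.count (x + v) := by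
      intro x; have := hcd1 x; have := hcd2 x; omega
    have hdflip : ∀ x : V, D.count x + D.count (x + v) = E.count x + E.count (x + v) := by
      intro x; have := hcd1 x; have := hcd2 x; omega
    obtain ⟨x0, hx0⟩ := wDE
    have hx0v : D.count (x0 + v) ≠ E.count (x0 + v) := by have := hdflip x0; omega
    have hx0DE : x0 ∈ D ∨ x0 ∈ E := by
      by_cases h1 : x0 ∈ D
      · exact Or.inl h1
      · exact Or.inr (mcnt E x0 (by have := cz D x0 h1; omega))
    have hx0vDE : (x0 + v) ∈ D ∨ (x0 + v) ∈ E := by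
      by_cases h1 : (x0 + v) ∈ D
      · exact Or.inl h1
      · exact Or.inr (mcnt E (x0 + v) (by have := cz D (x0 + v) h1; omega))
    have hBxv : B.count (x0 + v) = 0 := by
      rcases hx0vDE with h | h
      · exact cz B _ (fun hb => hBD _ hb h)
      · exact cz B _ (fun hb => hBE _ hb h)
    have hLxv : L.count (x0 + v) = 0 := by
      rcases hx0vDE with h | h
      · exact cz L _ (fun hb => hDL _ h hb)
      · exact cz L _ (fun hb => hEL _ h hb)
    have hCv : C.count v = 0 := cz C v (fun hc => hBC v hvB hc)
    have hHv : H.count v = 0 := cz H v (fun hc => hBH v hvB hc)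
    have hcx0 := hcflip x0
    rcases hx0DE with hxD | hxE
    · have h := hPS x0 (hD0 x0 hxD) (hP2D x0 hxD) v
      rw [show v + x0 = x0 + v from add_comm v x0] at h
      have hCx : C.count x0 = 0 := cz C _ (fun hc => hCD _ hc hxD)
      have hHx : H.count x0 = 0 := cz H _ (fun hc => hDH _ hxD hc)
      omega
    · have h := hQR x0 (hE0 x0 hxE) (hP2E x0 hxE) v
      rw [show v + x0 = x0 + v from add_comm v x0] at h
      have hCx : C.count x0 = 0 := cz C _ (fun hc => hCE _ hc hxE)
      have hHx : H.count x0 = 0 := cz H _ (fun hc => hEH _ hxE hc)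
      omega
  -- SC : multiplicities agree on C ∩ H
  have SC : ∀ v, v ∈ C → v ∈ H → C.count v = H.count v := by
    intro v hvC hvH
    have hv0 : v ≠ 0 := hC0 v hvC
    have hcd1 := hPR v hv0 (hP2C v hvC)
    have hcd2 := hQS v hv0 (hP2H v hvH)
    have hbflip : ∀ x : V, B.count x + B.count (x + v) = L.count x + L.count (x + v) := by
      intro x; have := hcd1 x; have := hcd2 x; omega
    have hdflip : ∀ x : V, D.count x + D.count (x + v) = E.count x + E.count (x + v) := by
      intro x; have := hcd1 x; have := hcd2 x; omega
    obtain ⟨x0, hx0⟩ := wDE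
    have hx0v : D.count (x0 + v) ≠ E.count (x0 + v) := by have := hdflip x0; omega
    have hx0DE : x0 ∈ D ∨ x0 ∈ E := by
      by_cases h1 : x0 ∈ D
      · exact Or.inl h1
      · exact Or.inr (mcnt E x0 (by have := cz D x0 h1; omega))
    have hx0vDE : (x0 + v) ∈ D ∨ (x0 + v) ∈ E := by
      by_cases h1 : (x0 + v) ∈ D
      · exact Or.inl h1
      · exact Or.inr (mcnt E (x0 + v) (by have := cz D (x0 + v) h1; omega))
    have hCxv : C.count (x0 + v) = 0 := by
      rcases hx0vDE with h | h
      · exact cz C _ (fun hb => hCD _ hb h)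
      · exact cz C _ (fun hb => hCE _ hb h)
    have hHxv : H.count (x0 + v) = 0 := by
      rcases hx0vDE with h | h
      · exact cz H _ (fun hb => hDH _ h hb)
      · exact cz H _ (fun hb => hEH _ h hb)
    have hBv : B.count v = 0 := cz B v (fun hc => hBC v hc hvC)
    have hLv : L.count v = 0 := cz L v (fun hc => hCL v hvC hc)
    have hbx0 := hbflip x0
    rcases hx0DE with hxD | hxE
    · have h := hPS x0 (hD0 x0 hxD) (hP2D x0 hxD) v
      rw [show v + x0 = x0 + v from add_comm v x0] at h
      have hBx : B.count x0 = 0 := cz B _ (fun hc => hBD _ hc hxD)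
      have hLx : L.count x0 = 0 := cz L _ (fun hc => hDL _ hxD hc)
      omega
    · have h := hQR x0 (hE0 x0 hxE) (hP2E x0 hxE) v
      rw [show v + x0 = x0 + v from add_comm v x0] at h
      have hBx : B.count x0 = 0 := cz B _ (fun hc => hBE _ hc hxE)
      have hLx : L.count x0 = 0 := cz L _ (fun hc => hEL _ hxE hc)
      omega
  -- SD : multiplicities agree on D ∩ E
  have SD : ∀ v, v ∈ D → v ∈ E → D.count v = E.count v := by
    intro v hvD hvE
    have hv0 : v ≠ 0 := hD0 v hvD
    have hcd1 := hPS v hv0 (hP2D v hvD)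
    have hcd2 := hQR v hv0 (hP2E v hvE)
    have hbflip : ∀ x : V, B.count x + B.count (x + v) = L.count x + L.count (x + v) := by
      intro x; have := hcd1 x; have := hcd2 x; omega
    have hcflip : ∀ x : V, C.count x + C.count (x + v) = H.count x + H.count (x + v) := by
      intro x; have := hcd1 x; have := hcd2 x; omega
    obtain ⟨x0, hx0⟩ := wCH
    have hx0v : C.count (x0 + v) ≠ H.count (x0 + v) := by have := hcflip x0; omega
    have hx0CH : x0 ∈ C ∨ x0 ∈ H := by
      by_cases h1 : x0 ∈ C
      · exact Or.inl h1
      · exact Or.inr (mcnt H x0 (by have := cz C x0 h1; omega))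
    have hx0vCH : (x0 + v) ∈ C ∨ (x0 + v) ∈ H := by
      by_cases h1 : (x0 + v) ∈ C
      · exact Or.inl h1
      · exact Or.inr (mcnt H (x0 + v) (by have := cz C (x0 + v) h1; omega))
    have hDxv : D.count (x0 + v) = 0 := by
      rcases hx0vCH with h | h
      · exact cz D _ (fun hb => hCD _ h hb)
      · exact cz D _ (fun hb => hDH _ hb h)
    have hExv : E.count (x0 + v) = 0 := by
      rcases hx0vCH with h | h
      · exact cz E _ (fun hb => hCE _ h hb)
      · exact cz E _ (fun hb => hEH _ hb h)
    have hBv : B.count v = 0 := cz B v (fun hc => hBD v hc hvD)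
    have hLv : L.count v = 0 := cz L v (fun hc => hDL v hvD hc)
    have hbx0 := hbflip x0
    rcases hx0CH with hxC | hxH
    · have h := hPR x0 (hC0 x0 hxC) (hP2C x0 hxC) v
      rw [show v + x0 = x0 + v from add_comm v x0] at h
      have hBx : B.count x0 = 0 := cz B _ (fun hc => hBC _ hc hxC)
      have hLx : L.count x0 = 0 := cz L _ (fun hc => hCL _ hxC hc)
      omega
    · have h := hQS x0 (hH0 x0 hxH) (hP2H x0 hxH) v
      rw [show v + x0 = x0 + v from add_comm v x0] at h
      have hBx : B.count x0 = 0 := cz B _ (fun hc => hBH _ hc hxH)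
      have hLx : L.count x0 = 0 := cz L _ (fun hc => hHL _ hxH hc)
      omega
  -- membership helpers
  have memB0 : ∀ v, v ∈ B0 → v ∈ B ∧ v ∈ L := by
    intro v hv; rw [hB0def] at hv; exact ⟨Multiset.mem_inter.mp hv |>.1, Multiset.mem_inter.mp hv |>.2⟩
  have memC0 : ∀ v, v ∈ C0 → v ∈ C ∧ v ∈ H := by
    intro v hv; rw [hC0def] at hv; exact ⟨Multiset.mem_inter.mp hv |>.1, Multiset.mem_inter.mp hv |>.2⟩
  have memD0 : ∀ v, v ∈ D0 → v ∈ D ∧ v ∈ E := by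
    intro v hv; rw [hD0def] at hv; exact ⟨Multiset.mem_inter.mp hv |>.1, Multiset.mem_inter.mp hv |>.2⟩
  have memB1 : ∀ v, v ∈ B1 → v ∈ B := fun v hv =>
    Multiset.mem_of_le (hB1def ▸ Multiset.sub_le_self B B0) hv
  have memL1 : ∀ v, v ∈ L1 → v ∈ L := fun v hv =>
    Multiset.mem_of_le (hL1def ▸ Multiset.sub_le_self L B0) hv
  have memC1 : ∀ v, v ∈ C1 → v ∈ C := fun v hv =>
    Multiset.mem_of_le (hC1def ▸ Multiset.sub_le_self C C0) hv
  have memH1 : ∀ v, v ∈ H1 → v ∈ H := fun v hv =>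
    Multiset.mem_of_le (hH1def ▸ Multiset.sub_le_self H C0) hv
  have memD1 : ∀ v, v ∈ D1 → v ∈ D := fun v hv =>
    Multiset.mem_of_le (hD1def ▸ Multiset.sub_le_self D D0) hv
  have memE1 : ∀ v, v ∈ E1 → v ∈ E := fun v hv =>
    Multiset.mem_of_le (hE1def ▸ Multiset.sub_le_self E D0) hv
  -- special disjointness
  have dB0B1 : ∀ v, v ∈ B0 → v ∈ B1 → False := by
    intro v h0 h1
    obtain ⟨hvB, hvL⟩ := memB0 v h0
    have hEq := SB v hvB hvL
    have hc : B1.count v = 0 := by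
      rw [hB1def, Multiset.count_sub, hB0def, Multiset.count_inter]; omega
    exact (Multiset.count_ne_zero.mpr h1) hc
  have dB0L1 : ∀ v, v ∈ B0 → v ∈ L1 → False := by
    intro v h0 h1
    obtain ⟨hvB, hvL⟩ := memB0 v h0
    have hEq := SB v hvB hvL
    have hc : L1.count v = 0 := by
      rw [hL1def, Multiset.count_sub, hB0def, Multiset.count_inter]; omega
    exact (Multiset.count_ne_zero.mpr h1) hc
  have dB1L1 : ∀ v, v ∈ B1 → v ∈ L1 → False := by
    intro v h1 h2
    have hc1 := Multiset.count_ne_zero.mpr h1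
    have hc2 := Multiset.count_ne_zero.mpr h2
    rw [hB1def, Multiset.count_sub, hB0def, Multiset.count_inter] at hc1
    rw [hL1def, Multiset.count_sub, hB0def, Multiset.count_inter] at hc2
    omega
  have dC0C1 : ∀ v, v ∈ C0 → v ∈ C1 → False := by
    intro v h0 h1
    obtain ⟨hvC, hvH⟩ := memC0 v h0
    have hEq := SC v hvC hvH
    have hc : C1.count v = 0 := by
      rw [hC1def, Multiset.count_sub, hC0def, Multiset.count_inter]; omega
    exact (Multiset.count_ne_zero.mpr h1) hc
  have dC0H1 : ∀ v, v ∈ C0 → v ∈ H1 → False := by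
    intro v h0 h1
    obtain ⟨hvC, hvH⟩ := memC0 v h0
    have hEq := SC v hvC hvH
    have hc : H1.count v = 0 := by
      rw [hH1def, Multiset.count_sub, hC0def, Multiset.count_inter]; omega
    exact (Multiset.count_ne_zero.mpr h1) hc
  have dC1H1 : ∀ v, v ∈ C1 → v ∈ H1 → False := by
    intro v h1 h2
    have hc1 := Multiset.count_ne_zero.mpr h1
    have hc2 := Multiset.count_ne_zero.mpr h2
    rw [hC1def, Multiset.count_sub, hC0def, Multiset.count_inter] at hc1
    rw [hH1def, Multiset.count_sub, hC0def, Multiset.count_inter] at hc2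
    omega
  have dD0D1 : ∀ v, v ∈ D0 → v ∈ D1 → False := by
    intro v h0 h1
    obtain ⟨hvD, hvE⟩ := memD0 v h0
    have hEq := SD v hvD hvE
    have hc : D1.count v = 0 := by
      rw [hD1def, Multiset.count_sub, hD0def, Multiset.count_inter]; omega
    exact (Multiset.count_ne_zero.mpr h1) hc
  have dD0E1 : ∀ v, v ∈ D0 → v ∈ E1 → False := by
    intro v h0 h1
    obtain ⟨hvD, hvE⟩ := memD0 v h0
    have hEq := SD v hvD hvE
    have hc : E1.count v = 0 := by
      rw [hE1def, Multiset.count_sub, hD0def, Multiset.count_inter]; omega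
    exact (Multiset.count_ne_zero.mpr h1) hc
  have dD1E1 : ∀ v, v ∈ D1 → v ∈ E1 → False := by
    intro v h1 h2
    have hc1 := Multiset.count_ne_zero.mpr h1
    have hc2 := Multiset.count_ne_zero.mpr h2
    rw [hD1def, Multiset.count_sub, hD0def, Multiset.count_inter] at hc1
    rw [hE1def, Multiset.count_sub, hD0def, Multiset.count_inter] at hc2
    omega
  refine ⟨⟨hB1ne, hC1ne, hD1ne, hE1ne, hH1ne, hL1ne⟩, ?_⟩
  refine List.Pairwise.cons ?_ (List.Pairwise.cons ?_ (List.Pairwise.cons ?_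
    (List.Pairwise.cons ?_ (List.Pairwise.cons ?_ (List.Pairwise.cons ?_
    (List.Pairwise.cons ?_ (List.Pairwise.cons ?_ (List.Pairwise.cons ?_
    (List.Pairwise.cons ?_ List.Pairwise.nil)))))))))
  · intro t ht
    simp only [List.mem_cons, List.not_mem_nil, or_false] at ht
    rcases ht with rfl | rfl | rfl | rfl | rfl | rfl | rfl | rfl | rfl
    · exact fun v hv h0 => hWB v hv (memB0 v h0).1
    · exact fun v hv h0 => hWC v hv (memC0 v h0).1
    · exact fun v hv h0 => hWD v hv (memD0 v h0).1
    · exact fun v hv h0 => hWB v hv (memB1 v h0)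
    · exact fun v hv h0 => hWC v hv (memC1 v h0)
    · exact fun v hv h0 => hWD v hv (memD1 v h0)
    · exact fun v hv h0 => hWE v hv (memE1 v h0)
    · exact fun v hv h0 => hWH v hv (memH1 v h0)
    · exact fun v hv h0 => hWL v hv (memL1 v h0)
  · intro t ht
    simp only [List.mem_cons, List.not_mem_nil, or_false] at ht
    rcases ht with rfl | rfl | rfl | rfl | rfl | rfl | rfl | rfl
    · exact fun v hv h0 => hBC v (memB0 v hv).1 (memC0 v h0).1
    · exact fun v hv h0 => hBD v (memB0 v hv).1 (memD0 v h0).1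
    · exact dB0B1
    · exact fun v hv h0 => hBC v (memB0 v hv).1 (memC1 v h0)
    · exact fun v hv h0 => hBD v (memB0 v hv).1 (memD1 v h0)
    · exact fun v hv h0 => hBE v (memB0 v hv).1 (memE1 v h0)
    · exact fun v hv h0 => hBH v (memB0 v hv).1 (memH1 v h0)
    · exact dB0L1
  · intro t ht
    simp only [List.mem_cons, List.not_mem_nil, or_false] at ht
    rcases ht with rfl | rfl | rfl | rfl | rfl | rfl | rfl
    · exact fun v hv h0 => hCD v (memC0 v hv).1 (memD0 v h0).1
    · exact fun v hv h0 => hBC v (memB1 v h0) (memC0 v hv).1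
    · exact dC0C1
    · exact fun v hv h0 => hCD v (memC0 v hv).1 (memD1 v h0)
    · exact fun v hv h0 => hCE v (memC0 v hv).1 (memE1 v h0)
    · exact dC0H1
    · exact fun v hv h0 => hCL v (memC0 v hv).1 (memL1 v h0)
  · intro t ht
    simp only [List.mem_cons, List.not_mem_nil, or_false] at ht
    rcases ht with rfl | rfl | rfl | rfl | rfl | rfl
    · exact fun v hv h0 => hBD v (memB1 v h0) (memD0 v hv).1
    · exact fun v hv h0 => hCD v (memC1 v h0) (memD0 v hv).1
    · exact dD0D1
    · exact dD0E1
    · exact fun v hv h0 => hDH v (memD0 v hv).1 (memH1 v h0)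
    · exact fun v hv h0 => hDL v (memD0 v hv).1 (memL1 v h0)
  · intro t ht
    simp only [List.mem_cons, List.not_mem_nil, or_false] at ht
    rcases ht with rfl | rfl | rfl | rfl | rfl
    · exact fun v hv h0 => hBC v (memB1 v hv) (memC1 v h0)
    · exact fun v hv h0 => hBD v (memB1 v hv) (memD1 v h0)
    · exact fun v hv h0 => hBE v (memB1 v hv) (memE1 v h0)
    · exact fun v hv h0 => hBH v (memB1 v hv) (memH1 v h0)
    · exact dB1L1
  · intro t ht
    simp only [List.mem_cons, List.not_mem_nil, or_false] at ht
    rcases ht with rfl | rfl | rfl | rfl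
    · exact fun v hv h0 => hCD v (memC1 v hv) (memD1 v h0)
    · exact fun v hv h0 => hCE v (memC1 v hv) (memE1 v h0)
    · exact dC1H1
    · exact fun v hv h0 => hCL v (memC1 v hv) (memL1 v h0)
  · intro t ht
    simp only [List.mem_cons, List.not_mem_nil, or_false] at ht
    rcases ht with rfl | rfl | rfl
    · exact dD1E1
    · exact fun v hv h0 => hDH v (memD1 v hv) (memH1 v h0)
    · exact fun v hv h0 => hDL v (memD1 v hv) (memL1 v h0)
  · intro t ht
    simp only [List.mem_cons, List.not_mem_nil, or_false] at ht
    rcases ht with rfl | rfl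
    · exact fun v hv h0 => hEH v (memE1 v hv) (memH1 v h0)
    · exact fun v hv h0 => hEL v (memE1 v hv) (memL1 v h0)
  · intro t ht
    simp only [List.mem_cons, List.not_mem_nil, or_false] at ht
    rcases ht with rfl
    exact fun v hv h0 => hHL v (memH1 v hv) (memL1 v h0)
  · intro t ht
    simp only [List.not_mem_nil] at ht
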